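/- For every even integer m ≥ 6, the spectral radius of the graph S^-_{(m+4)/2, 2} is strictly greater than (1 + √(4m−5))/2. -/

import Mathlib

open Matrix SimpleGraph

open Classical in
/-- The adjacency matrix of a simple graph over `ℝ`. -/
noncomputable def adjMat {V : Type} [Fintype V] (G : SimpleGraph V) : Matrix V V ℝ :=
  fun u v => if G.Adj u v then (1 : ℝ) else 0

/-- `ρ` is the spectral radius (largest real eigenvalue) of the adjacency matrix of `G`. -/
def IsSpecRad {V : Type} [Fintype V] (G : SimpleGraph V) (ρ : ℝ) : Prop :=
  (∃ x : V → ℝ, x ≠ 0 ∧ adjMat G *ᵥ x = ρ • x) ∧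
  ∀ μ : ℝ, (∃ x : V → ℝ, x ≠ 0 ∧ adjMat G *ᵥ x = μ • x) → μ ≤ ρ

/-- `G` contains a copy of `F` as a (not necessarily induced) subgraph. -/
def ContainsSub {α β : Type} (F : SimpleGraph α) (G : SimpleGraph β) : Prop :=
  ∃ f : F →g G, Function.Injective f

/-- The graph `S⁻_{t+2,2}`: the join of `K_2` (the two `inl` vertices) with `t` independent
vertices, with the single edge from `inl 0` to `inr 0` deleted. It has `2t` edges.
For even `m`, `SminusG (m/2)` is the graph `S⁻_{(m+4)/2, 2}` of the paper. -/
def SminusG (t : ℕ) : SimpleGraph (Fin 2 ⊕ Fin t) :=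
  SimpleGraph.fromRel (fun x y =>
    match x, y with
    | Sum.inl _, Sum.inl _ => True
    | Sum.inl a, Sum.inr c => ¬(a = 0 ∧ (c : ℕ) = 0)
    | _, _ => False)

/-! The largest eigenvalue bounds the Rayleigh quotient, so it suffices to find a vector `x` with
`xᵀ A x > λ xᵀ x` for `λ = (1 + √(4m-5))/2`. For `S⁻_{(m+4)/2,2}` there is a positive vector that
is an eigenvector for `λ` up to a single coordinate: `A x = λ x + eᵥ/4`, whence
`xᵀ A x = λ xᵀ x + xᵥ/4`. -/

lemma Matrix.IsHermitian.dotProduct_mulVec_le {n : Type} [Fintype n] {M : Matrix n n ℝ}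
    (hM : M.IsHermitian) {ρ : ℝ}
    (hρ : ∀ μ : ℝ, (∃ x : n → ℝ, x ≠ 0 ∧ M *ᵥ x = μ • x) → μ ≤ ρ) (x : n → ℝ) :
    x ⬝ᵥ (M *ᵥ x) ≤ ρ * (x ⬝ᵥ x) := by
  classical
  have hB : (ρ • 1 - M).IsHermitian := (isHermitian_one.smul (.all ρ)).sub hM
  have hpsd : (ρ • 1 - M).PosSemidef := by
    refine hB.posSemidef_iff_eigenvalues_nonneg.mpr fun i => ?_
    have hv := hB.mulVec_eigenvectorBasis i
    rw [sub_mulVec, smul_mulVec, one_mulVec] at hv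
    have : ρ - hB.eigenvalues i ≤ ρ :=
      hρ _ ⟨_, (WithLp.ofLp_eq_zero 2).ne.2 <| hB.eigenvectorBasis.orthonormal.ne_zero i, by
        rw [sub_smul, ← hv, sub_sub_cancel]⟩
    simpa using this
  simpa [sub_mulVec, smul_mulVec, dotProduct_sub, dotProduct_smul] using
    (posSemidef_iff_dotProduct_mulVec.mp hpsd).2 x

lemma adjMat_isHermitian {V : Type} [Fintype V] (G : SimpleGraph V) : (adjMat G).IsHermitian := by
  ext u v
  simp only [adjMat, conjTranspose_apply, star_trivial]
  rw [G.adj_comm]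

open Classical in
lemma adjMat_mulVec_apply {V : Type} [Fintype V] (G : SimpleGraph V) (x : V → ℝ) (v : V) :
    (adjMat G *ᵥ x) v = ∑ u, if G.Adj v u then x u else 0 := by
  simp [mulVec, dotProduct, adjMat]

lemma IsSpecRad.lt_of_mulVec_eq_smul_add_single {V : Type} [Fintype V] [DecidableEq V]
    {G : SimpleGraph V} {ρ : ℝ} (hρ : IsSpecRad G ρ) {x : V → ℝ} {μ ε : ℝ} {v : V}
    (hx : adjMat G *ᵥ x = μ • x + Pi.single v ε) (hε : 0 < ε) (hxv : 0 < x v) : μ < ρ := by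
  have hle := (adjMat_isHermitian G).dotProduct_mulVec_le hρ.2 x
  rw [hx, dotProduct_add, dotProduct_smul, dotProduct_single, smul_eq_mul] at hle
  by_contra! hμ
  have hxx : 0 ≤ x ⬝ᵥ x := by simpa using dotProduct_self_star_nonneg x
  nlinarith [mul_pos hxv hε, mul_le_mul_of_nonneg_right hμ hxx]

namespace SminusG

variable {t : ℕ}

@[simp] lemma adj_inl_inl {a b : Fin 2} : (SminusG t).Adj (.inl a) (.inl b) ↔ a ≠ b := by
  simp [SminusG]

@[simp] lemma adj_inl_inr {a : Fin 2} {c : Fin t} :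
    (SminusG t).Adj (.inl a) (.inr c) ↔ ¬(a = 0 ∧ (c : ℕ) = 0) := by
  simp [SminusG]

@[simp] lemma adj_inr_inl {a : Fin 2} {c : Fin t} :
    (SminusG t).Adj (.inr c) (.inl a) ↔ ¬(a = 0 ∧ (c : ℕ) = 0) := by
  simp [SminusG]

@[simp] lemma not_adj_inr_inr {c d : Fin t} : ¬(SminusG t).Adj (.inr c) (.inr d) := by
  simp [SminusG]

/-- With `C = μ + k` and `A = μ + k + 1/2` this is `(μC, μA)` on the clique, `A` at `inr 0` and
`A + C` elsewhere. The rows of the independent vertices are then exact for `μ`, and the ratio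
`C : A` makes the row of `inl 0` exact as well. -/
noncomputable def testVec (k : ℕ) (μ : ℝ) : Fin 2 ⊕ Fin (k + 1) → ℝ :=
  Sum.elim ![μ * (μ + k), μ * (μ + k + 1 / 2)]
    (Fin.cons (μ + k + 1 / 2) fun _ => 2 * (μ + k) + 1 / 2)

lemma adjMat_mulVec_testVec (k : ℕ) {μ : ℝ} (hμ : μ ^ 2 = μ + 2 * k + 1 / 2) :
    adjMat (SminusG (k + 1)) *ᵥ testVec k μ = μ • testVec k μ + Pi.single (.inl 1) (1 / 4) := by
  ext (a | c)
  · fin_cases a <;> simp [adjMat_mulVec_apply, Fin.sum_univ_succ, testVec]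
    · linear_combination (-(μ + k)) * hμ
    · linear_combination (-(μ + k + 1 / 2)) * hμ
  · cases c using Fin.cases <;> simp [adjMat_mulVec_apply, Fin.sum_univ_succ, testVec]
    ring

end SminusG

/-- for even `m ≥ 6`, `ρ(S⁻_{(m+4)/2,2}) > (1 + √(4m-5))/2`. -/
theorem specRad_Sminus_gt (m : ℕ) (hme : Even m) (hm : 6 ≤ m)
    (ρ : ℝ) (hρ : IsSpecRad (SminusG (m / 2)) ρ) :
    (1 + Real.sqrt (4 * m - 5)) / 2 < ρ := by
  obtain ⟨k, rfl⟩ : ∃ k, m = 2 * k + 2 := by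
    obtain ⟨r, rfl⟩ := hme
    exact ⟨r - 1, by omega⟩
  rw [show (2 * k + 2) / 2 = k + 1 by omega] at hρ
  set μ := (1 + Real.sqrt (4 * ((2 * k + 2 : ℕ) : ℝ) - 5)) / 2
  have hs : Real.sqrt (4 * ((2 * k + 2 : ℕ) : ℝ) - 5) ^ 2 = 8 * k + 3 := by
    rw [Real.sq_sqrt] <;> push_cast <;> linarith
  have hμ : μ ^ 2 = μ + 2 * k + 1 / 2 := by linear_combination hs / 4
  have hμ0 : 0 < μ := by positivity
  refine hρ.lt_of_mulVec_eq_smul_add_single (SminusG.adjMat_mulVec_testVec k hμ) (by norm_num) ?_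
  simp only [SminusG.testVec, Sum.elim_inl, Matrix.cons_val_one, Matrix.cons_val_zero]
  positivity
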